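/- arXiv:2209.05737 — 2 statements merged into one kernel-verified Lean document; each statement's English description precedes it below -/
import Mathlib

section
/- Up to simplicial isomorphism, there is exactly one triangulation of the 2-sphere with 5 vertices. -/
open Finset

/-- The edges (2-element vertex subsets contained in some face) of a face set `F`. -/
def triEdges (n : ℕ) (F : Finset (Finset (Fin n))) : Finset (Finset (Fin n)) :=
  (Finset.powersetCard 2 Finset.univ).filter (fun e => ∃ f ∈ F, e ⊆ f)

/-- Degree of a vertex: the number of edges containing it. -/
def triDegree (n : ℕ) (F : Finset (Finset (Fin n))) (v : Fin n) : ℕ :=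
  ((triEdges n F).filter (fun e => v ∈ e)).card

/-- `F` is the face set of a triangulation of the 2-sphere on the vertex set `Fin n`:
every face is a triangle, every vertex lies in a face, every edge lies in exactly
two faces, the link of every vertex is connected (hence, being 2-regular, a cycle),
the 1-skeleton is connected, and the Euler characteristic is 2 (so the underlying
closed surface is the 2-sphere). -/
def IsSphereTriangulation (n : ℕ) (F : Finset (Finset (Fin n))) : Prop :=
  (∀ f ∈ F, f.card = 3) ∧
  (∀ v : Fin n, ∃ f ∈ F, v ∈ f) ∧
  (∀ e : Finset (Fin n), e.card = 2 → (∃ f ∈ F, e ⊆ f) →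
      (F.filter (fun f => e ⊆ f)).card = 2) ∧
  (∀ v a b : Fin n, (∃ f ∈ F, v ∈ f ∧ a ∈ f) → (∃ f ∈ F, v ∈ f ∧ b ∈ f) →
      a ≠ v → b ≠ v →
      Relation.ReflTransGen (fun x y => ({v, x, y} : Finset (Fin n)) ∈ F) a b) ∧
  (∀ a b : Fin n, Relation.ReflTransGen (fun x y => ∃ f ∈ F, x ∈ f ∧ y ∈ f) a b) ∧
  ((n : ℤ) - ((triEdges n F).card : ℤ) + (F.card : ℤ) = 2)

/-- Simplicial isomorphism of two face sets on `Fin n`. -/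
def TriIso (n : ℕ) (F F' : Finset (Finset (Fin n))) : Prop :=
  ∃ σ : Equiv.Perm (Fin n), F.image (fun f => f.image σ) = F'

/-- A face-rainbow 3-edge-coloring: every triangular face has its three
boundary edges colored with three pairwise distinct colors. -/
def Rainbow (n : ℕ) (F : Finset (Finset (Fin n))) (c : Finset (Fin n) → Fin 3) : Prop :=
  ∀ f ∈ F, ∀ a ∈ f, ∀ b ∈ f, ∀ d ∈ f, a ≠ b → a ≠ d → b ≠ d →
    c {a, b} ≠ c {a, d}

/-- Two edge-colorings are equivalent if they differ by a permutation of the colors. -/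
def ColorEquiv (n : ℕ) (F : Finset (Finset (Fin n)))
    (c c' : Finset (Fin n) → Fin 3) : Prop :=
  ∃ π : Equiv.Perm (Fin 3), ∀ e ∈ triEdges n F, c' e = π (c e)

/-- The degree sequence (as a multiset) of a triangulation. -/
def degSeq (n : ℕ) (F : Finset (Finset (Fin n))) : Multiset ℕ :=
  (Finset.univ.val : Multiset (Fin n)).map (triDegree n F)


/-- The triangular bipyramid: equator `0,1,2`, apexes `3,4`. -/
def Bipy : Finset (Finset (Fin 5)) :=
  {{0,1,3},{0,1,4},{0,2,3},{0,2,4},{1,2,3},{1,2,4}}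

/-- Bounded reachability (Boolean, hence decidable). -/
def reachN (r : Fin 5 → Fin 5 → Bool) : ℕ → Fin 5 → Fin 5 → Bool
  | 0, a, b => a == b
  | n+1, a, b => a == b || (List.finRange 5).any (fun c => r a c && reachN r n c b)

lemma reachN_sound (r : Fin 5 → Fin 5 → Bool) (R : Fin 5 → Fin 5 → Prop)
    (h : ∀ x y, r x y = true → R x y) :
    ∀ n a b, reachN r n a b = true → Relation.ReflTransGen R a b := by
  intro n
  induction n with
  | zero =>
    intro a b hab
    simp only [reachN, beq_iff_eq] at hab
    exact hab ▸ Relation.ReflTransGen.refl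
  | succ n ih =>
    intro a b hab
    simp only [reachN, Bool.or_eq_true, beq_iff_eq, List.any_eq_true,
      Bool.and_eq_true] at hab
    rcases hab with rfl | ⟨c, _, hac, hcb⟩
    · exact Relation.ReflTransGen.refl
    · exact Relation.ReflTransGen.head (h _ _ hac) (ih c b hcb)

lemma bipy_link : ∀ v a b : Fin 5, (∃ f ∈ Bipy, v ∈ f ∧ a ∈ f) →
    (∃ f ∈ Bipy, v ∈ f ∧ b ∈ f) → a ≠ v → b ≠ v →
    reachN (fun x y => decide (({v, x, y} : Finset (Fin 5)) ∈ Bipy)) 5 a b = true := by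
  decide

lemma bipy_conn : ∀ a b : Fin 5,
    reachN (fun x y => decide (∃ f ∈ Bipy, x ∈ f ∧ y ∈ f)) 5 a b = true := by
  decide

lemma bipy_decidable_props :
    (∀ f ∈ Bipy, f.card = 3) ∧
    (∀ v : Fin 5, ∃ f ∈ Bipy, v ∈ f) ∧
    (∀ e : Finset (Fin 5), e.card = 2 → (∃ f ∈ Bipy, e ⊆ f) →
        (Bipy.filter (fun f => e ⊆ f)).card = 2) ∧
    (((5:ℕ) : ℤ) - ((triEdges 5 Bipy).card : ℤ) + ((Bipy.card : ℕ) : ℤ) = 2) := by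
  decide

lemma bipy_is_triangulation : IsSphereTriangulation 5 Bipy := by
  obtain ⟨h1, h2, h3, h6⟩ := bipy_decidable_props
  refine ⟨h1, h2, h3, ?_, ?_, ?_⟩
  · intro v a b ha hb hav hbv
    exact reachN_sound _ _ (fun x y h => of_decide_eq_true h) 5 a b
      (bipy_link v a b ha hb hav hbv)
  · intro a b
    exact reachN_sound _ _ (fun x y h => of_decide_eq_true h) 5 a b (bipy_conn a b)
  · exact_mod_cast h6

/-- The 10 triangles on 5 vertices, indexed. -/
def tri : Fin 10 → Finset (Fin 5) :=
  ![{0,1,2},{0,1,3},{0,1,4},{0,2,3},{0,2,4},{0,3,4},{1,2,3},{1,2,4},{1,3,4},{2,3,4}]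

/-- The 10 pairs on 5 vertices, indexed. -/
def pr : Fin 10 → Finset (Fin 5) :=
  ![{0,1},{0,2},{0,3},{0,4},{1,2},{1,3},{1,4},{2,3},{2,4},{3,4}]

/-- Vertex-triangle incidence. -/
def vInc : Fin 10 → Fin 5 → Bool :=
  ![![true,true,true,false,false],
    ![true,true,false,true,false],
    ![true,true,false,false,true],
    ![true,false,true,true,false],
    ![true,false,true,false,true],
    ![true,false,false,true,true],
    ![false,true,true,true,false],
    ![false,true,true,false,true],
    ![false,true,false,true,true],
    ![false,false,true,true,true]]

/-- Pair-triangle incidence. -/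
def eInc : Fin 10 → Fin 10 → Bool :=
  ![![true,true,true,false,false,false,false,false,false,false],
    ![true,false,false,true,true,false,false,false,false,false],
    ![false,true,false,true,false,true,false,false,false,false],
    ![false,false,true,false,true,true,false,false,false,false],
    ![true,false,false,false,false,false,true,true,false,false],
    ![false,true,false,false,false,false,true,false,true,false],
    ![false,false,true,false,false,false,false,true,true,false],
    ![false,false,false,true,false,false,true,false,false,true],
    ![false,false,false,false,true,false,false,true,false,true],
    ![false,false,false,false,false,true,false,false,true,true]]

/-- The 10 index sets of labeled bipyramids. -/
def goodI : Finset (Finset (Fin 10)) :=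
  {{1,2,3,4,6,7},
   {0,2,3,5,6,8},
   {0,1,4,5,7,8},
   {3,4,5,6,7,8},
   {0,1,4,5,6,9},
   {0,2,3,5,7,9},
   {1,2,5,6,7,9},
   {1,2,3,4,8,9},
   {0,2,4,6,8,9},
   {0,1,3,7,8,9}}

lemma tri_inj : Function.Injective tri := by decide
lemma card3_iff : ∀ f : Finset (Fin 5), f.card = 3 ↔ ∃ i, f = tri i := by decide
lemma vInc_iff : ∀ (i : Fin 10) (v : Fin 5), vInc i v = true ↔ v ∈ tri i := by decide
lemma eInc_iff : ∀ j i : Fin 10, eInc j i = true ↔ pr j ⊆ tri i := by decide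
lemma pr_card : ∀ j : Fin 10, (pr j).card = 2 := by decide

set_option maxRecDepth 100000 in
set_option maxHeartbeats 4000000 in
/-- The key finite check, done over index sets. -/
lemma coreKey : ∀ I : Finset (Fin 10),
    (∀ v : Fin 5, ∃ i ∈ I, vInc i v = true) →
    (∀ j : Fin 10, (∃ i ∈ I, eInc j i = true) →
        (I.filter (fun i => eInc j i = true)).card = 2) →
    I ∈ goodI := by
  decide +kernel

lemma to_bipy (F : Finset (Finset (Fin 5))) (hF : IsSphereTriangulation 5 F) :
    ∃ σ : Equiv.Perm (Fin 5), F.image (fun f => f.image σ) = Bipy := by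
  obtain ⟨h1, h2, h3, -, -, -⟩ := hF
  set I : Finset (Fin 10) := Finset.univ.filter (fun i => tri i ∈ F) with hI
  have hFI : F = I.image tri := by
    ext f
    simp only [hI, Finset.mem_image, Finset.mem_filter, Finset.mem_univ, true_and]
    constructor
    · intro hf
      obtain ⟨i, rfl⟩ := (card3_iff f).1 (h1 f hf)
      exact ⟨i, hf, rfl⟩
    · rintro ⟨i, hi, rfl⟩
      exact hi
  have hcov : ∀ v : Fin 5, ∃ i ∈ I, vInc i v = true := by
    intro v
    obtain ⟨f, hf, hv⟩ := h2 v
    rw [hFI] at hf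
    obtain ⟨i, hi, rfl⟩ := Finset.mem_image.1 hf
    exact ⟨i, hi, (vInc_iff i v).2 hv⟩
  have hedge : ∀ j : Fin 10, (∃ i ∈ I, eInc j i = true) →
      (I.filter (fun i => eInc j i = true)).card = 2 := by
    intro j hj
    obtain ⟨i, hi, hji⟩ := hj
    have hex : ∃ f ∈ F, pr j ⊆ f := by
      refine ⟨tri i, ?_, (eInc_iff j i).1 hji⟩
      rw [hFI]
      exact Finset.mem_image_of_mem _ hi
    have hc := h3 (pr j) (pr_card j) hex
    rw [hFI, Finset.filter_image, Finset.card_image_of_injective _ tri_inj] at hc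
    rw [← hc]
    congr 1
    exact Finset.filter_congr (fun i _ => (eInc_iff j i))
  have hmem := coreKey I hcov hedge
  simp only [goodI, Finset.mem_insert, Finset.mem_singleton] at hmem
  rcases hmem with h|h|h|h|h|h|h|h|h|h
  · rw [h] at hFI
    rw [hFI]
    exact ⟨⟨fun x => ![0,1,2,3,4] x, fun x => ![0,1,2,3,4] x, by decide, by decide⟩, by decide⟩
  · rw [h] at hFI
    rw [hFI]
    exact ⟨⟨fun x => ![0,1,3,2,4] x, fun x => ![0,1,3,2,4] x, by decide, by decide⟩, by decide⟩
  · rw [h] at hFI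
    rw [hFI]
    exact ⟨⟨fun x => ![0,1,3,4,2] x, fun x => ![0,1,4,2,3] x, by decide, by decide⟩, by decide⟩
  · rw [h] at hFI
    rw [hFI]
    exact ⟨⟨fun x => ![3,4,0,1,2] x, fun x => ![2,3,4,0,1] x, by decide, by decide⟩, by decide⟩
  · rw [h] at hFI
    rw [hFI]
    exact ⟨⟨fun x => ![0,3,1,2,4] x, fun x => ![0,2,3,1,4] x, by decide, by decide⟩, by decide⟩
  · rw [h] at hFI
    rw [hFI]
    exact ⟨⟨fun x => ![0,3,1,4,2] x, fun x => ![0,2,4,1,3] x, by decide, by decide⟩, by decide⟩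
  · rw [h] at hFI
    rw [hFI]
    exact ⟨⟨fun x => ![3,0,4,1,2] x, fun x => ![1,3,4,0,2] x, by decide, by decide⟩, by decide⟩
  · rw [h] at hFI
    rw [hFI]
    exact ⟨⟨fun x => ![0,3,4,1,2] x, fun x => ![0,3,4,1,2] x, by decide, by decide⟩, by decide⟩
  · rw [h] at hFI
    rw [hFI]
    exact ⟨⟨fun x => ![3,0,1,4,2] x, fun x => ![1,2,4,0,3] x, by decide, by decide⟩, by decide⟩
  · rw [h] at hFI
    rw [hFI]
    exact ⟨⟨fun x => ![3,0,1,2,4] x, fun x => ![1,2,3,0,4] x, by decide, by decide⟩, by decide⟩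

/-- Up to simplicial isomorphism there is exactly one triangulation of the
2-sphere with `5` vertices. -/
theorem unique_sphere_triangulation_five_vertices :
    (∃ F : Finset (Finset (Fin 5)), IsSphereTriangulation 5 F) ∧
      ∀ F F' : Finset (Finset (Fin 5)),
        IsSphereTriangulation 5 F → IsSphereTriangulation 5 F' → TriIso 5 F F' := by
  refine ⟨⟨Bipy, bipy_is_triangulation⟩, ?_⟩
  intro F F' hF hF'
  obtain ⟨σ, hσ⟩ := to_bipy F hF
  obtain ⟨σ', hσ'⟩ := to_bipy F' hF'
  refine ⟨σ.trans σ'.symm, ?_⟩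
  have : F.image (fun f => f.image (σ.trans σ'.symm)) =
      (F.image (fun f => f.image σ)).image (fun f => f.image σ'.symm) := by
    rw [Finset.image_image]
    apply Finset.image_congr
    intro f _
    simp [Finset.image_image, Function.comp]
  rw [this, hσ, ← hσ', Finset.image_image]
  have h2 : ∀ f ∈ F', ((fun f => Finset.image (⇑σ'.symm) f) ∘ (fun f => Finset.image (⇑σ') f)) f = id f := by
    intro f _
    simp [Finset.image_image, Function.comp]
  rw [Finset.image_congr h2, Finset.image_id]
end

section
/- There exist two triangulations of the 2-sphere with 8 vertices that have the same degree sequence (3,3,4,4,5,5,6,6) but are not simplicially isomorphic. -/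
open Finset

/-! ### Auxiliary machinery -/

/-- One step of a breadth-first search for the relation `R`. -/
def reachStep (R : Fin 8 → Fin 8 → Prop) [DecidableRel R] (s : Finset (Fin 8)) :
    Finset (Fin 8) :=
  s ∪ Finset.univ.filter (fun y => ∃ x ∈ s, R x y)

lemma reflTransGen_of_reach {R : Fin 8 → Fin 8 → Prop} [DecidableRel R] {a : Fin 8} :
    ∀ (n : ℕ) (s : Finset (Fin 8)), (∀ x ∈ s, Relation.ReflTransGen R a x) →
      ∀ b ∈ (reachStep R)^[n] s, Relation.ReflTransGen R a b
  | 0, s, hs, b, hb => hs b hb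
  | (n+1), s, hs, b, hb => by
      rw [Function.iterate_succ_apply] at hb
      refine reflTransGen_of_reach n _ ?_ b hb
      intro x hx
      rcases Finset.mem_union.1 hx with h | h
      · exact hs x h
      · obtain ⟨y, hy, hR⟩ := (Finset.mem_filter.1 h).2
        exact (hs y hy).tail hR

/-- The two triangulations. -/
def F1 : Finset (Finset (Fin 8)) :=
  { {0,1,2}, {0,1,5}, {0,2,7}, {0,5,6}, {0,6,7}, {1,2,5},
    {2,3,6}, {2,3,7}, {2,5,6}, {3,4,6}, {3,4,7}, {4,6,7} }

def F2 : Finset (Finset (Fin 8)) :=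
  { {0,1,2}, {0,1,3}, {0,2,5}, {0,3,6}, {0,5,6}, {1,2,7},
    {1,3,7}, {2,4,6}, {2,4,7}, {2,5,6}, {3,6,7}, {4,6,7} }

/-- A fixed neighbour of each vertex, used as a hub for link connectivity. -/
def hub1 : Fin 8 → Fin 8 := ![1,0,0,2,3,0,0,0]
def hub2 : Fin 8 → Fin 8 := ![1,0,0,0,2,0,0,1]

lemma symm_link (F : Finset (Finset (Fin 8))) (v : Fin 8) :
    Symmetric (fun x y => ({v, x, y} : Finset (Fin 8)) ∈ F) := by
  intro x y h
  have : ({v, y, x} : Finset (Fin 8)) = {v, x, y} := by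
    ext z; simp only [Finset.mem_insert, Finset.mem_singleton]; tauto
  simpa [this] using h

lemma symm_skel (F : Finset (Finset (Fin 8))) :
    Symmetric (fun x y : Fin 8 => ∃ f ∈ F, x ∈ f ∧ y ∈ f) := by
  rintro x y ⟨f, hf, hx, hy⟩; exact ⟨f, hf, hy, hx⟩

/-- Generic verification of conditions 4 and 5 via BFS certificates. -/
lemma link_conn (F : Finset (Finset (Fin 8))) (hub : Fin 8 → Fin 8)
    (key : ∀ v b : Fin 8, (∃ f ∈ F, v ∈ f ∧ b ∈ f) → b ≠ v →
      b ∈ (reachStep (fun x y => ({v, x, y} : Finset (Fin 8)) ∈ F))^[6] {hub v}) :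
    ∀ v a b : Fin 8, (∃ f ∈ F, v ∈ f ∧ a ∈ f) → (∃ f ∈ F, v ∈ f ∧ b ∈ f) →
      a ≠ v → b ≠ v →
      Relation.ReflTransGen (fun x y => ({v, x, y} : Finset (Fin 8)) ∈ F) a b := by
  intro v a b ha hb hav hbv
  have start : ∀ x ∈ ({hub v} : Finset (Fin 8)),
      Relation.ReflTransGen (fun x y => ({v, x, y} : Finset (Fin 8)) ∈ F) (hub v) x := by
    intro x hx
    rw [Finset.mem_singleton] at hx
    subst hx; exact Relation.ReflTransGen.refl
  have h1 := reflTransGen_of_reach 6 _ start a (key v a ha hav)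
  have h2 := reflTransGen_of_reach 6 _ start b (key v b hb hbv)
  exact Relation.ReflTransGen.trans
    (by haveI : Std.Symm (fun x y => ({v, x, y} : Finset (Fin 8)) ∈ F) := ⟨fun a b h => symm_link F v h⟩; exact Std.Symm.symm _ _ h1) h2

lemma skel_conn (F : Finset (Finset (Fin 8)))
    (key : ∀ b : Fin 8,
      b ∈ (reachStep (fun x y : Fin 8 => ∃ f ∈ F, x ∈ f ∧ y ∈ f))^[8] {0}) :
    ∀ a b : Fin 8, Relation.ReflTransGen (fun x y => ∃ f ∈ F, x ∈ f ∧ y ∈ f) a b := by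
  intro a b
  have start : ∀ x ∈ ({(0 : Fin 8)} : Finset (Fin 8)),
      Relation.ReflTransGen (fun x y : Fin 8 => ∃ f ∈ F, x ∈ f ∧ y ∈ f) 0 x := by
    intro x hx; rw [Finset.mem_singleton] at hx; subst hx
    exact Relation.ReflTransGen.refl
  have h1 := reflTransGen_of_reach 8 _ start a (key a)
  have h2 := reflTransGen_of_reach 8 _ start b (key b)
  exact Relation.ReflTransGen.trans
    (by haveI : Std.Symm (fun x y : Fin 8 => ∃ f ∈ F, x ∈ f ∧ y ∈ f) := ⟨fun a b h => symm_skel F h⟩; exact Std.Symm.symm _ _ h1) h2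

/-! ### Isomorphism invariance -/

lemma triEdges_image {F F' : Finset (Finset (Fin 8))} (σ : Equiv.Perm (Fin 8))
    (h : F.image (fun f => f.image σ) = F') :
    (triEdges 8 F).image (fun e => e.image σ) = triEdges 8 F' := by
  ext e'
  simp only [Finset.mem_image, triEdges, Finset.mem_filter, Finset.mem_powersetCard,
    Finset.subset_univ, true_and]
  constructor
  · rintro ⟨e, ⟨⟨hcard, f, hf, hef⟩, rfl⟩⟩
    refine ⟨by rw [Finset.card_image_of_injective _ σ.injective]; exact hcard,
      f.image σ, ?_, Finset.image_subset_image hef⟩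
    rw [← h]; exact Finset.mem_image_of_mem _ hf
  · rintro ⟨hcard, f', hf', hef'⟩
    rw [← h] at hf'
    obtain ⟨f, hf, rfl⟩ := Finset.mem_image.1 hf'
    refine ⟨e'.image σ.symm, ⟨⟨by rw [Finset.card_image_of_injective _ σ.symm.injective]; exact hcard,
      f, hf, ?_⟩, ?_⟩⟩
    · intro x hx
      obtain ⟨y, hy, rfl⟩ := Finset.mem_image.1 hx
      obtain ⟨z, hz, hzy⟩ := Finset.mem_image.1 (hef' hy)
      rwa [← hzy, Equiv.symm_apply_apply]
    · rw [Finset.image_image]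
      have : (fun x => σ (σ.symm x)) = id := by
        funext x; simp
      simp only [Function.comp_def, this]
      simp
  
lemma triDegree_image {F F' : Finset (Finset (Fin 8))} (σ : Equiv.Perm (Fin 8))
    (h : F.image (fun f => f.image σ) = F') (v : Fin 8) :
    triDegree 8 F' (σ v) = triDegree 8 F v := by
  unfold triDegree
  rw [← triEdges_image σ h, Finset.filter_image]
  rw [Finset.card_image_of_injective _ (Finset.image_injective σ.injective)]
  have hp : ∀ e : Finset (Fin 8), (σ v ∈ e.image σ) ↔ v ∈ e := by
    intro e; simp [Finset.mem_image, σ.injective.eq_iff]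
  simp only [hp]

/-- The invariant: an edge whose two endpoints both have degree 5. -/
def HasDeg5Edge (F : Finset (Finset (Fin 8))) : Prop :=
  ∃ e ∈ triEdges 8 F, ∀ v ∈ e, triDegree 8 F v = 5

lemma hasDeg5Edge_of_iso {F F' : Finset (Finset (Fin 8))} (h : TriIso 8 F F')
    (hF : HasDeg5Edge F) : HasDeg5Edge F' := by
  obtain ⟨σ, hσ⟩ := h
  obtain ⟨e, he, hdeg⟩ := hF
  refine ⟨e.image σ, ?_, ?_⟩
  · rw [← triEdges_image σ hσ]; exact Finset.mem_image_of_mem _ he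
  · intro v hv
    obtain ⟨w, hw, rfl⟩ := Finset.mem_image.1 hv
    rw [triDegree_image σ hσ]; exact hdeg w hw

/-! ### The main theorem -/

set_option maxRecDepth 100000 in
set_option maxHeartbeats 4000000 in
/-- There exist two non-isomorphic triangulations of the 2-sphere with `8`
vertices having the same degree sequence `(3,3,4,4,5,5,6,6)`. -/
theorem eight_vertex_same_degree_sequence_nonisomorphic :
    ∃ F F' : Finset (Finset (Fin 8)),
      IsSphereTriangulation 8 F ∧ IsSphereTriangulation 8 F' ∧
      degSeq 8 F = ({3,3,4,4,5,5,6,6} : Multiset ℕ) ∧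
      degSeq 8 F' = ({3,3,4,4,5,5,6,6} : Multiset ℕ) ∧
      ¬ TriIso 8 F F' := by
  refine ⟨F1, F2, ⟨?_, ?_, ?_, ?_, ?_, ?_⟩, ⟨?_, ?_, ?_, ?_, ?_, ?_⟩, ?_, ?_, ?_⟩
  · decide
  · decide
  · decide
  · exact link_conn F1 hub1 (by decide)
  · exact skel_conn F1 (by decide)
  · decide
  · decide
  · decide
  · decide
  · exact link_conn F2 hub2 (by decide)
  · exact skel_conn F2 (by decide)
  · decide
  · decide
  · decide
  · intro h
    have h2 : ¬ HasDeg5Edge F2 := by unfold HasDeg5Edge; decide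
    have h1 : HasDeg5Edge F1 := by unfold HasDeg5Edge; decide
    exact h2 (hasDeg5Edge_of_iso h h1)
end
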